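/- arXiv:1005.5223 — 7 statements merged into one kernel-verified Lean document; each statement's English description precedes it below -/
import Mathlib

section
/- In a connected graph G with a distinguished root r and a set B of faulty vertices with r ∉ B, the set of vertices v such that min_{b∈B} d(v,b) > d(r,v) induces a connected subgraph containing r (where d denotes graph distance). -/
/-!
Every `v ≠ r` with `d(r, v) < d(v, b)` for all `b ∈ B` has a neighbour one step closer to `r`,
and that neighbour satisfies the same inequalities: moving one step closer to `r` lowers
`d(r, ·)` by one but `d(·, b)` by at most one. Following such neighbours, every vertex of the
set reaches `r` inside it.
-/

namespace BFS

variable {V : Type*}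

/-- Distance from a vertex to a set of vertices (min over the set). -/
noncomputable def distS (G : SimpleGraph V) (v : V) (S : Set V) : ℕ := sInf (G.dist v '' S)

/-- The predicate `I_d`: every vertex has level at least `min d (dist to B ∪ {r})`. -/
def IPred (G : SimpleGraph V) (r : V) (B : Set V) (d : ℕ) (ℓ : V → ℕ) : Prop :=
  ∀ v, min d (distS G v (B ∪ {r})) ≤ ℓ v

/-- The containment area `S_B = {v | dist(v,B) ≤ d(v,r)}`. -/
def SB (G : SimpleGraph V) (r : V) (B : Set V) : Set V :=
  {v | ∃ b ∈ B, G.dist v b ≤ G.dist v r}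

/-- The containment area `S_B* = {v | dist(v,B) < d(v,r)}`. -/
def SBstar (G : SimpleGraph V) (r : V) (B : Set V) : Set V :=
  {v | ∃ b ∈ B, G.dist v b < G.dist v r}

/-- A BFS path `w 0, …, w k`: starts at a vertex of `B ∪ {r}` with level `0` and no
parent, each vertex points to the previous one, levels increase by one, and the parent's
level is minimal among the neighbours' levels. -/
def IsBFSPath (G : SimpleGraph V) (r : V) (B : Set V) (ℓ : V → ℕ)
    (prnt : V → Option V) (k : ℕ) (w : ℕ → V) : Prop :=
  1 ≤ k ∧ prnt (w 0) = none ∧ ℓ (w 0) = 0 ∧ w 0 ∈ B ∪ {r} ∧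
  ∀ i, 1 ≤ i → i ≤ k →
    prnt (w i) = some (w (i - 1)) ∧ G.Adj (w (i - 1)) (w i) ∧
    ℓ (w i) = ℓ (w (i - 1)) + 1 ∧
    ℓ (w (i - 1)) = sInf (ℓ '' {u | G.Adj (w i) u})

/-- The specification of BFS spanning tree construction. -/
def Spec (G : SimpleGraph V) (r : V) (B : Set V) (ℓ : V → ℕ)
    (prnt : V → Option V) (v : V) : Prop :=
  (v = r → prnt v = none ∧ ℓ v = 0) ∧
  (v ≠ r → ∃ k w, IsBFSPath G r B ℓ prnt k w ∧ w k = v)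

end BFS

/-!
Every `v ≠ r` with `d(r, v) < d(v, b)` for all `b ∈ B` has a neighbour one step closer to `r`, and that neighbour satisfies the
same inequalities: moving one step closer to `r` lowers `d(r, ·)` by one but `d(·, b)` by at most one.
Following such neighbours, every vertex of the set reaches `r` inside it.
-/

namespace SimpleGraph

variable {V : Type*} {G : SimpleGraph V}

lemma Reachable.exists_adj_dist_add_one {r v : V} (hrv : G.Reachable r v) (hne : r ≠ v) :
    ∃ u, G.Adj u v ∧ G.dist r u + 1 = G.dist r v := by
  obtain ⟨p, hp⟩ := hrv.symm.exists_walk_length_eq_dist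
  cases p with
  | nil => exact absurd rfl hne
  | @cons _ u _ hadj q =>
    refine ⟨u, hadj.symm, le_antisymm ?_ ?_⟩
    · calc G.dist r u + 1 ≤ q.length + 1 := by rw [dist_comm]; exact Nat.succ_le_succ (dist_le q)
        _ = G.dist r v := by rw [dist_comm, ← hp, Walk.length_cons]
    · have h := hadj.symm.reachable.dist_triangle_right r
      rwa [dist_eq_one_iff_adj.2 hadj.symm] at h

lemma dist_lt_dist_of_adj_of_dist_add_one {r u v b : V} (hadj : G.Adj u v)
    (hu : G.dist r u + 1 = G.dist r v) (hv : G.dist r v < G.dist v b) :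
    G.dist r u < G.dist u b := by
  have : G.dist v b ≤ G.dist v u + G.dist u b := hadj.symm.reachable.dist_triangle_left b
  rw [dist_eq_one_iff_adj.2 hadj.symm] at this
  omega

lemma induce_connected_of_exists_adj_dist_lt {s : Set V} {r : V} (hr : r ∈ s)
    (hstep : ∀ v ∈ s, v ≠ r → ∃ u ∈ s, G.Adj u v ∧ G.dist r u < G.dist r v) :
    (G.induce s).Connected := by
  rw [connected_iff_exists_forall_reachable]
  refine ⟨⟨r, hr⟩, ?_⟩
  suffices h : ∀ n, ∀ v (hv : v ∈ s), G.dist r v = n → (G.induce s).Reachable ⟨r, hr⟩ ⟨v, hv⟩ from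
    fun ⟨v, hv⟩ ↦ h _ v hv rfl
  intro n
  induction n using Nat.strong_induction_on with
  | _ n ih =>
    rintro v hv rfl
    by_cases hvr : v = r
    · subst hvr; rfl
    obtain ⟨u, hu, hadj, hlt⟩ := hstep v hv hvr
    exact (ih _ hlt u hu rfl).trans (Adj.reachable (G := G.induce s) hadj)

end SimpleGraph

open BFS in
theorem stmt0_general {V : Type*} (G : SimpleGraph V) (hG : G.Connected)
    (r : V) (B : Set V) (hrB : r ∉ B) :
    r ∈ {v : V | ∀ b ∈ B, G.dist r v < G.dist v b} ∧
      (SimpleGraph.induce {v : V | ∀ b ∈ B, G.dist r v < G.dist v b} G).Connected := by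
  have hr : r ∈ {v : V | ∀ b ∈ B, G.dist r v < G.dist v b} := fun b hb ↦ by
    simpa using hG.pos_dist_of_ne (ne_of_mem_of_not_mem hb hrB).symm
  refine ⟨hr, G.induce_connected_of_exists_adj_dist_lt hr fun v hv hvr ↦ ?_⟩
  obtain ⟨u, hadj, hu⟩ := (hG r v).exists_adj_dist_add_one (Ne.symm hvr)
  exact ⟨u, fun b hb ↦ G.dist_lt_dist_of_adj_of_dist_add_one hadj hu (hv b hb), hadj, by omega⟩

open BFS in
/-- In a connected graph `G` with root `r` and Byzantine set `B` with `r ∉ B`,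
the set of vertices `v` with `min_{b ∈ B} d(v,b) > d(r,v)` (i.e. `V ∖ S_B*`)
induces a connected subgraph containing `r`. -/
theorem stmt0 {V : Type*} [Fintype V] (G : SimpleGraph V) (hG : G.Connected)
    (r : V) (B : Set V) (hrB : r ∉ B) :
    r ∈ {v : V | ∀ b ∈ B, G.dist r v < G.dist v b} ∧
      (SimpleGraph.induce {v : V | ∀ b ∈ B, G.dist r v < G.dist v b} G).Connected :=
  stmt0_general G hG r B hrB
end

section
/- In a connected graph G with root r and Byzantine set B avoiding r, the set of vertices v satisfying min_{b∈B} d(v,b) ≥ d(r,v) induces a connected subgraph of G containing r. -/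
/-!
A vertex `v ≠ r` that is at least as close to `r` as to every `b ∈ B` keeps this property when it
moves one step along a geodesic towards `r`: its distance to `r` drops by one, and its distance to
each `b` drops by at most one. Following such steps from any vertex of the set reaches `r` without
leaving the set.
-/

namespace SimpleGraph

variable {V : Type*} {G : SimpleGraph V}

lemma Reachable.exists_adj_dist_add_one_eq {v r : V} (h : G.Reachable v r) (hne : v ≠ r) :
    ∃ u, G.Adj v u ∧ G.dist u r + 1 = G.dist v r := by
  obtain ⟨p, hp⟩ := h.exists_walk_length_eq_dist
  cases p with
  | nil => exact absurd rfl hne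
  | cons hadj q =>
    refine ⟨_, hadj, le_antisymm ?_ ?_⟩
    · have := dist_le q
      rw [Walk.length_cons] at hp
      omega
    · obtain ⟨q', hq'⟩ := (Walk.reachable q).exists_walk_length_eq_dist
      simpa [hq'] using dist_le (Walk.cons hadj q')

lemma reachable_induce_of_forall_exists_adj_dist_lt {s : Set V} {r v : V} (hr : r ∈ s)
    (h : ∀ v ∈ s, v ≠ r → ∃ u ∈ s, G.Adj v u ∧ G.dist u r < G.dist v r) (hv : v ∈ s) :
    (G.induce s).Reachable ⟨v, hv⟩ ⟨r, hr⟩ := by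
  by_cases hvr : v = r
  · subst hvr
    rfl
  obtain ⟨u, hu, hadj, hlt⟩ := h v hv hvr
  have hadj' : (G.induce s).Adj ⟨v, hv⟩ ⟨u, hu⟩ := hadj
  exact hadj'.reachable.trans (reachable_induce_of_forall_exists_adj_dist_lt hr h hu)
termination_by G.dist v r

lemma connected_induce_of_forall_exists_adj_dist_lt {s : Set V} {r : V} (hr : r ∈ s)
    (h : ∀ v ∈ s, v ≠ r → ∃ u ∈ s, G.Adj v u ∧ G.dist u r < G.dist v r) :
    (G.induce s).Connected :=
  (connected_iff_exists_forall_reachable _).2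
    ⟨⟨r, hr⟩, fun ⟨_, hv⟩ => (reachable_induce_of_forall_exists_adj_dist_lt hr h hv).symm⟩

lemma Connected.exists_adj_dist_lt_of_forall_dist_le (hG : G.Connected) {B : Set V} {r v : V}
    (hv : ∀ b ∈ B, G.dist r v ≤ G.dist v b) (hvr : v ≠ r) :
    ∃ u ∈ {u | ∀ b ∈ B, G.dist r u ≤ G.dist u b}, G.Adj v u ∧ G.dist u r < G.dist v r := by
  obtain ⟨u, hadj, hu⟩ := (hG.preconnected v r).exists_adj_dist_add_one_eq hvr
  refine ⟨u, fun b hb => ?_, hadj, by omega⟩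
  have hvb : G.dist v b ≤ G.dist v u + G.dist u b := hadj.reachable.dist_triangle_left b
  have hrv := hv b hb
  rw [dist_eq_one_iff_adj.2 hadj] at hvb
  rw [dist_comm] at hrv ⊢
  omega

end SimpleGraph

open BFS in
theorem stmt1_general {V : Type*} (G : SimpleGraph V) (hG : G.Connected)
    (r : V) (B : Set V) :
    r ∈ {v : V | ∀ b ∈ B, G.dist r v ≤ G.dist v b} ∧
      (SimpleGraph.induce {v : V | ∀ b ∈ B, G.dist r v ≤ G.dist v b} G).Connected := by
  have hr : r ∈ {v : V | ∀ b ∈ B, G.dist r v ≤ G.dist v b} := fun b _ => by simp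
  exact ⟨hr, SimpleGraph.connected_induce_of_forall_exists_adj_dist_lt hr
    fun _ hv => hG.exists_adj_dist_lt_of_forall_dist_le hv⟩

open BFS in
/-- In a connected graph `G` with root `r` and Byzantine set `B` avoiding `r`,
the set of vertices `v` with `min_{b ∈ B} d(v,b) ≥ d(r,v)` (i.e. `V ∖ S_B`)
induces a connected subgraph containing `r`. -/
theorem stmt1 {V : Type*} [Fintype V] (G : SimpleGraph V) (hG : G.Connected)
    (r : V) (B : Set V) (hrB : r ∉ B) :
    r ∈ {v : V | ∀ b ∈ B, G.dist r v ≤ G.dist v b} ∧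
      (SimpleGraph.induce {v : V | ∀ b ∈ B, G.dist r v ≤ G.dist v b} G).Connected :=
  stmt1_general G hG r B
end

section
/- For any configuration assigning each vertex v a level ℓ(v) ∈ ℕ, and any d ∈ ℕ, the predicate I_d (every vertex v satisfies ℓ(v) ≥ min(d, dist(v, B ∪ {r}))) is preserved by one min+1 step: if a non-root correct vertex v updates ℓ(v) to 1 + min_{q ∈ N(v)} ℓ(q), and I_d held before, then I_d holds after the update. -/
namespace BFS

variable {V : Type*} {G : SimpleGraph V} {S : Set V} {u q b : V}

lemma distS_le_dist (hb : b ∈ S) : distS G u S ≤ G.dist u b :=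
  Nat.sInf_le ⟨b, hb, rfl⟩

lemma exists_dist_eq_distS (hS : S.Nonempty) : ∃ b ∈ S, G.dist u b = distS G u S :=
  Nat.sInf_mem (hS.image _)

lemma distS_le_distS_add_one_of_adj (hadj : G.Adj u q) (hS : S.Nonempty) :
    distS G u S ≤ distS G q S + 1 := by
  obtain ⟨b, hb, hqb⟩ := exists_dist_eq_distS (G := G) (u := q) hS
  calc distS G u S ≤ G.dist u b := distS_le_dist hb
    _ ≤ G.dist u q + G.dist q b := hadj.reachable.dist_triangle_left b
    _ = distS G q S + 1 := by rw [SimpleGraph.dist_eq_one_iff_adj.mpr hadj, hqb, add_comm]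

lemma IPred.min_distS_le_one_add_sInf_neighbors {r : V} {B : Set V} {d : ℕ} {ℓ : V → ℕ}
    (hI : IPred G r B d ℓ) (hu : ¬ G.IsIsolated u) :
    min d (distS G u (B ∪ {r})) ≤ 1 + sInf (ℓ '' {q | G.Adj u q}) := by
  obtain ⟨q, hq, hqmin⟩ : sInf (ℓ '' {q | G.Adj u q}) ∈ ℓ '' {q | G.Adj u q} :=
    Nat.sInf_mem ((G.neighborSet_nonempty.mpr hu).image ℓ)
  have hdist := distS_le_distS_add_one_of_adj (S := B ∪ {r}) hq ⟨r, Or.inr rfl⟩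
  have hq_level := hI q
  omega

end BFS

open BFS in
theorem stmt2_general {V : Type*} (G : SimpleGraph V) (hG : G.Connected)
    (r : V) (B : Set V) (d : ℕ) (ℓ ℓ' : V → ℕ)
    (v : V) (hvr : v ≠ r)
    (hupd : ℓ' v = 1 + sInf (ℓ '' {u | G.Adj v u}))
    (hoth : ∀ u, u ≠ v → ℓ' u = ℓ u)
    (hI : BFS.IPred G r B d ℓ) :
    BFS.IPred G r B d ℓ' := by
  intro u
  by_cases hu : u = v
  · subst hu
    have : Nontrivial V := nontrivial_of_ne u r hvr
    rw [hupd]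
    exact hI.min_distS_le_one_add_sInf_neighbors (hG.preconnected.not_isIsolated u)
  · rw [hoth u hu]
    exact hI u

open BFS in
/-- Closure of `I_d` under one `min+1` step: if a correct non-root vertex `v`
updates its level to `1 + min_{q ∈ N(v)} ℓ(q)` (all other vertices unchanged) and
`I_d` held before, then `I_d` holds afterwards. -/
theorem stmt2 {V : Type*} [Fintype V] (G : SimpleGraph V) (hG : G.Connected)
    (r : V) (B : Set V) (hrB : r ∉ B) (d : ℕ) (ℓ ℓ' : V → ℕ)
    (v : V) (hvr : v ≠ r) (hvB : v ∉ B)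
    (hupd : ℓ' v = 1 + sInf (ℓ '' {u | G.Adj v u}))
    (hoth : ∀ u, u ≠ v → ℓ' u = ℓ u)
    (hI : BFS.IPred G r B d ℓ) :
    BFS.IPred G r B d ℓ' :=
  stmt2_general G hG r B d ℓ ℓ' v hvr hupd hoth hI
end

section
/- In a configuration where parent pointers and levels form BFS paths for all vertices outside S_B (i.e., every v ∉ S_B ∪ {r} has a parent prnt(v) ∈ N(v) with ℓ(v) = ℓ(prnt(v)) + 1 and ℓ(prnt(v)) = min over neighbors of v, and the chain ends at r with ℓ(r)=0), every vertex v ∉ S_B satisfies ℓ(v) = d(v, r). -/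
/-!
Outside `S_B` the Byzantine vertices are farther away than the root, so `I_D` bounds the level
from below by the true distance. Conversely, a vertex `v ≠ r` is the end of a BFS path, so its
level is one more than the least level among its neighbours, in particular at most one more
than that of a neighbour `u` one step closer to `r`. Such a `u` again lies outside `S_B`, and
induction on `d(v, r)` closes the argument.
-/

namespace BFS

variable {V : Type*} {G : SimpleGraph V} {r : V} {B : Set V} {ℓ : V → ℕ}

lemma dist_le_distS_of_notMem_SB {v : V} (hv : v ∉ SB G r B) :
    G.dist v r ≤ distS G v (B ∪ {r}) := by
  refine le_csInf ⟨G.dist v r, r, Or.inr rfl, rfl⟩ ?_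
  rintro _ ⟨b, hb | rfl, rfl⟩
  · exact le_of_not_ge fun hle => hv ⟨b, hb, hle⟩
  · exact le_rfl

lemma dist_le_level_of_notMem_SB {D : ℕ} {v : V} (hD : G.dist v r ≤ D)
    (hI : IPred G r B D ℓ) (hv : v ∉ SB G r B) : G.dist v r ≤ ℓ v :=
  (le_min hD (dist_le_distS_of_notMem_SB hv)).trans (hI v)

lemma notMem_SB_of_adj {u v : V} (hv : v ∉ SB G r B) (hadj : G.Adj v u)
    (hdist : G.dist u r + 1 ≤ G.dist v r) : u ∉ SB G r B := by
  rintro ⟨b, hb, hub⟩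
  have hvb : G.dist v b ≤ G.dist v u + G.dist u b := hadj.reachable.dist_triangle_left b
  have hvu : G.dist v u = 1 := SimpleGraph.dist_eq_one_iff_adj.mpr hadj
  exact hv ⟨b, hb, by omega⟩

lemma IsBFSPath.level_le_succ_of_adj {prnt : V → Option V} {k : ℕ} {w : ℕ → V}
    (hw : IsBFSPath G r B ℓ prnt k w) {u : V} (hadj : G.Adj (w k) u) : ℓ (w k) ≤ ℓ u + 1 := by
  obtain ⟨hk, -, -, -, hstep⟩ := hw
  obtain ⟨-, -, hsucc, hmin⟩ := hstep k hk le_rfl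
  have : sInf (ℓ '' {x | G.Adj (w k) x}) ≤ ℓ u := Nat.sInf_le ⟨u, hadj, rfl⟩
  omega

lemma Spec.level_le_succ_of_adj {prnt : V → Option V} {u v : V}
    (hs : Spec G r B ℓ prnt v) (hvr : v ≠ r) (hadj : G.Adj v u) : ℓ v ≤ ℓ u + 1 := by
  obtain ⟨k, w, hw, rfl⟩ := hs.2 hvr
  exact hw.level_le_succ_of_adj hadj

end BFS

namespace SimpleGraph

lemma exists_adj_dist_eq_of_dist_eq_succ {V : Type*} {G : SimpleGraph V} {v r : V} {n : ℕ}
    (hn : G.dist v r = n + 1) : ∃ u, G.Adj v u ∧ G.dist u r = n := by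
  obtain ⟨p, hp⟩ := exists_walk_of_dist_ne_zero (G := G) (u := v) (v := r) (by omega)
  cases p with
  | nil => simp at hn
  | @cons _ u _ hadj q =>
    have hq : q.length = n := by simp only [Walk.length_cons] at hp; omega
    have htri : G.dist v r ≤ G.dist v u + G.dist u r := hadj.reachable.dist_triangle_left r
    rw [dist_eq_one_iff_adj.mpr hadj] at htri
    exact ⟨u, hadj, le_antisymm (hq ▸ dist_le q) (by omega)⟩

end SimpleGraph

open BFS in
theorem stmt5_general {V : Type*} (G : SimpleGraph V) (hG : G.Connected)
    (r : V) (B : Set V) (D : ℕ) (hD : ∀ u w, G.dist u w ≤ D)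
    (ℓ : V → ℕ) (prnt : V → Option V)
    (hI : BFS.IPred G r B D ℓ)
    (hspec : ∀ v, v ∉ BFS.SB G r B → BFS.Spec G r B ℓ prnt v) :
    ∀ v, v ∉ BFS.SB G r B → ℓ v = G.dist v r := by
  intro v hv
  induction hn : G.dist v r generalizing v with
  | zero =>
    obtain rfl := hG.dist_eq_zero_iff.mp hn
    exact ((hspec v hv).1 rfl).2
  | succ n ih =>
    obtain ⟨u, hadj, hu⟩ := SimpleGraph.exists_adj_dist_eq_of_dist_eq_succ hn
    have hvr : v ≠ r := by rintro rfl; simp at hn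
    have hlower := dist_le_level_of_notMem_SB (hD v r) hI hv
    have hupper := (hspec v hv).level_le_succ_of_adj hvr hadj
    have huSB : u ∉ SB G r B := notMem_SB_of_adj hv hadj (by omega)
    have hℓu := ih u huSB hu
    omega

open BFS in
/-- If every vertex outside `S_B` satisfies the BFS specification (so parent
pointers and levels form BFS paths ending at `r`, with `ℓ(r) = 0`), and the levels
satisfy `I_D`, then every vertex `v ∉ S_B` satisfies `ℓ(v) = d(v,r)`. -/
theorem stmt5 {V : Type*} [Fintype V] (G : SimpleGraph V) (hG : G.Connected)
    (r : V) (B : Set V) (hrB : r ∉ B) (D : ℕ) (hD : ∀ u w, G.dist u w ≤ D)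
    (ℓ : V → ℕ) (prnt : V → Option V)
    (hI : BFS.IPred G r B D ℓ)
    (hspec : ∀ v, v ∉ BFS.SB G r B → BFS.Spec G r B ℓ prnt v) :
    ∀ v, v ∉ BFS.SB G r B → ℓ v = G.dist v r :=
  stmt5_general G hG r B D hD ℓ prnt hI hspec
end

section
/- Any configuration in LC* is (2m, Δ, S_B*, n−1)-TA time contained: in any execution from such a configuration, each vertex outside S_B* changes its output variables at most Δ times, and the total number of S_B*-TA-disruptions is at most 2m = Σ_v Δ_v. -/
namespace BFS

variable {V : Type*}

/-- A configuration: each vertex has a level and a parent pointer. -/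
structure Config (V : Type*) where
  lvl : V → ℕ
  prnt : V → Option V

/-- The guard of the `min+1` protocol. The root is enabled when its output is not
`(⊥, 0)`; another process is enabled unless its parent is a neighbour with minimal
level among the neighbours and its own level is the parent's level plus one. -/
def Enabled (G : SimpleGraph V) (r : V) (ρ : Config V) (v : V) : Prop :=
  (v = r → (ρ.prnt v ≠ none ∨ ρ.lvl v ≠ 0)) ∧
  (v ≠ r → ¬ ∃ u, ρ.prnt v = some u ∧ G.Adj v u ∧ ρ.lvl v = ρ.lvl u + 1 ∧
      ∀ q, G.Adj v q → ρ.lvl u ≤ ρ.lvl q)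

/-- The set of neighbours of `v` with minimal level. -/
def minNbrs (G : SimpleGraph V) (ρ : Config V) (v : V) : Set V :=
  {q | G.Adj v q ∧ ∀ q', G.Adj v q' → ρ.lvl q ≤ ρ.lvl q'}

/-- One step of the `min+1` protocol where the set `A` of processes is activated:
non-activated correct processes keep their state, the root resets its output, an
enabled activated correct process adopts some minimal-level neighbour as parent,
Byzantine processes behave arbitrarily. -/
def StepM (G : SimpleGraph V) (r : V) (B : Set V) (ρ ρ' : Config V) (A : Set V) : Prop :=
  ∀ v, v ∉ B →
    (v ∉ A → ρ'.lvl v = ρ.lvl v ∧ ρ'.prnt v = ρ.prnt v) ∧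
    (v ∈ A →
      (v = r → ρ'.lvl v = 0 ∧ ρ'.prnt v = none) ∧
      (v ≠ r → (Enabled G r ρ v →
          ∃ p ∈ minNbrs G ρ v, ρ'.prnt v = some p ∧ ρ'.lvl v = ρ.lvl p + 1) ∧
        (¬ Enabled G r ρ v → ρ'.lvl v = ρ.lvl v ∧ ρ'.prnt v = ρ.prnt v)))

/-- An execution of the `min+1` protocol along the schedule `A`. -/
def IsExecM (G : SimpleGraph V) (r : V) (B : Set V)
    (e : ℕ → Config V) (A : ℕ → Set V) : Prop :=
  ∀ n, StepM G r B (e n) (e (n + 1)) (A n)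

/-- Fairness: a correct process that is infinitely often enabled is infinitely
often activated. -/
def Fair (G : SimpleGraph V) (r : V) (B : Set V)
    (e : ℕ → Config V) (A : ℕ → Set V) : Prop :=
  ∀ v, v ∉ B → (∀ n, ∃ m, n ≤ m ∧ Enabled G r (e m) v) → ∀ n, ∃ m, n ≤ m ∧ v ∈ A m

/-- Round-robin choice: `p` is the next element of `A` (w.r.t. the numbering `num`)
strictly after index `c`, cyclically. -/
def IsChoice (num : V → ℕ) (c : ℕ) (A : Set V) (p : V) : Prop :=
  p ∈ A ∧
  ((∃ a ∈ A, c < num a) → (c < num p ∧ ∀ a ∈ A, c < num a → num p ≤ num a)) ∧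
  ((∀ a ∈ A, num a ≤ c) → ∀ a ∈ A, num p ≤ num a)

/-- Index of the current parent of `v` (0 if it has no parent). -/
def currIdx (num : V → ℕ) (ρ : Config V) (v : V) : ℕ := (ρ.prnt v).elim 0 num

/-- One step of the `SSBFS` protocol (round-robin variant of `min+1`). -/
def StepRR (G : SimpleGraph V) (r : V) (B : Set V) (num : V → ℕ)
    (ρ ρ' : Config V) (A : Set V) : Prop :=
  ∀ v, v ∉ B →
    (v ∉ A → ρ'.lvl v = ρ.lvl v ∧ ρ'.prnt v = ρ.prnt v) ∧
    (v ∈ A →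
      (v = r → ρ'.lvl v = 0 ∧ ρ'.prnt v = none) ∧
      (v ≠ r → (Enabled G r ρ v →
          ∃ p, IsChoice num (currIdx num ρ v) (minNbrs G ρ v) p ∧
            ρ'.prnt v = some p ∧ ρ'.lvl v = ρ.lvl p + 1) ∧
        (¬ Enabled G r ρ v → ρ'.lvl v = ρ.lvl v ∧ ρ'.prnt v = ρ.prnt v)))

/-- An execution of the `SSBFS` protocol along the schedule `A`. -/
def IsExecRR (G : SimpleGraph V) (r : V) (B : Set V) (num : V → ℕ)
    (e : ℕ → Config V) (A : ℕ → Set V) : Prop :=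
  ∀ n, StepRR G r B num (e n) (e (n + 1)) (A n)

end BFS

namespace BFS

variable {V : Type*}

/-- A configuration is `S_B*`-legitimate: every `S_B*`-correct process satisfies
the specification. -/
def LegitStar (G : SimpleGraph V) (r : V) (B : Set V) (ρ : Config V) : Prop :=
  ∀ v, v ∉ B → v ∉ SBstar G r B → Spec G r B ρ.lvl ρ.prnt v

/-- A configuration is `S_B*`-stable: as long as Byzantine processes take no action,
no `S_B*`-correct process ever changes its output variables. -/
def StableStar (G : SimpleGraph V) (r : V) (B : Set V) (num : V → ℕ)
    (ρ : Config V) : Prop :=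
  ∀ (e : ℕ → Config V) (A : ℕ → Set V), IsExecRR G r B num e A → e 0 = ρ →
    (∀ n, ∀ b ∈ B, (e (n + 1)).lvl b = (e n).lvl b ∧ (e (n + 1)).prnt b = (e n).prnt b) →
    ∀ v, v ∉ B → v ∉ SBstar G r B → ∀ n, (e n).lvl v = ρ.lvl v ∧ (e n).prnt v = ρ.prnt v

/-- The portion of execution from time `n` to time `t` is a `S_B*`-TA-disruption. -/
def IsDisruption (G : SimpleGraph V) (r : V) (B : Set V) (num : V → ℕ)
    (e : ℕ → Config V) (n t : ℕ) : Prop :=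
  n < t ∧ LegitStar G r B (e n) ∧ StableStar G r B num (e n) ∧
  LegitStar G r B (e t) ∧ StableStar G r B num (e t) ∧
  (∀ s, n < s → s < t → ¬ (LegitStar G r B (e s) ∧ StableStar G r B num (e s))) ∧
  ∃ i v, n ≤ i ∧ i < t ∧ v ∉ B ∧ v ∉ SBstar G r B ∧
    ((e (i + 1)).lvl v ≠ (e i).lvl v ∨ (e (i + 1)).prnt v ≠ (e i).prnt v)

end BFS

/-!
Outside `S_B*` the levels are frozen at the distance to `r`: at time `0` this follows from the
specification together with the lower bound `I_D`, which every step preserves, and afterwards a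
move sets a level to `1 +` the minimal level of the neighbours, which `I_D` bounds from below.
Hence a vertex `v ≠ r` outside `S_B*` always has its neighbour `u` on a shortest path to `r`
among its minimal neighbours, and it is disabled as soon as its parent is `u`. Every move of `v`
advances its parent pointer in the cyclic order of the round robin, which ends at `u`, so the
successive parents of `v` are distinct neighbours and `v` moves at most `deg v ≤ Δ` times.
Every disruption contains such a move, and two disruptions are disjoint because the later one
starts in a legitimate stable configuration; so there are at most `∑ deg v = 2m` of them.
-/

namespace Finset

lemma card_le_of_injOn_of_card_filter_range_le {s : Finset ℕ} {P : ℕ → Prop} [DecidablePred P]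
    {K : ℕ} (hP : ∀ N, #{j ∈ range N | P j} ≤ K) {f : ℕ → ℕ} (hf : ∀ i ∈ s, P (f i))
    (hinj : Set.InjOn f s) : #s ≤ K := by
  refine (card_le_card_of_injOn f (fun i hi => ?_) hinj).trans (hP (s.sup f + 1))
  exact mem_filter.2 ⟨mem_range.2 (Nat.lt_succ_of_le (le_sup hi)), hf i hi⟩

lemma card_filter_exists_le_sum {α ι : Type*} [Fintype ι] {s : Finset α} (P : ι → α → Prop)
    [∀ i, DecidablePred (P i)] [DecidablePred fun a => ∃ i, P i a] :
    #{a ∈ s | ∃ i, P i a} ≤ ∑ i, #{a ∈ s | P i a} := by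
  classical
  refine (card_le_card fun a ha => ?_).trans card_biUnion_le
  obtain ⟨has, i, hi⟩ := mem_filter.1 ha
  exact mem_biUnion.2 ⟨i, mem_univ i, mem_filter.2 ⟨has, hi⟩⟩

end Finset

namespace BFS

variable {V : Type*}

section Distance

variable {G : SimpleGraph V} {r : V} {B : Set V}

lemma distS_le_dist_s11 {S : Set V} {w : V} (v : V) (hw : w ∈ S) : distS G v S ≤ G.dist v w :=
  Nat.sInf_le ⟨w, hw, rfl⟩

lemma distS_eq_zero {S : Set V} {v : V} (hv : v ∈ S) : distS G v S = 0 :=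
  Nat.le_zero.mp (SimpleGraph.dist_self (G := G) ▸ distS_le_dist_s11 v hv)

lemma distS_le_succ_of_adj (hG : G.Connected) {S : Set V} (hS : S.Nonempty) {v q : V}
    (h : G.Adj v q) : distS G v S ≤ distS G q S + 1 := by
  obtain ⟨w, hw, hwq⟩ : ∃ w ∈ S, G.dist q w = distS G q S := Nat.sInf_mem (hS.image _)
  calc distS G v S ≤ G.dist v w := distS_le_dist_s11 v hw
    _ ≤ G.dist v q + G.dist q w := hG.dist_triangle
    _ = distS G q S + 1 := by rw [hwq, SimpleGraph.dist_eq_one_iff_adj.2 h, add_comm]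

lemma notMem_of_notMem_SBstar (hG : G.Connected) (hrB : r ∉ B) {v : V}
    (hv : v ∉ SBstar G r B) : v ∉ B := by
  intro hvB
  have hvr : G.dist v r ≠ 0 :=
    SimpleGraph.dist_ne_zero_iff_ne_and_reachable.2 ⟨fun h => hrB (h ▸ hvB), hG v r⟩
  exact hv ⟨v, hvB, by rw [SimpleGraph.dist_self]; omega⟩

lemma distS_eq_dist_of_notMem_SBstar {v : V} (hv : v ∉ SBstar G r B) :
    distS G v (B ∪ {r}) = G.dist v r := by
  refine le_antisymm (distS_le_dist_s11 v (by simp)) (le_csInf ⟨_, r, by simp, rfl⟩ ?_)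
  rintro _ ⟨w, hw | rfl, rfl⟩
  · exact not_lt.mp fun h => hv ⟨w, hw, h⟩
  · exact le_rfl

lemma exists_adj_dist_succ (hG : G.Connected) {v : V} (hvr : v ≠ r) :
    ∃ u, G.Adj v u ∧ G.dist u r + 1 = G.dist v r := by
  have hdist : G.dist v r ≠ 0 := SimpleGraph.dist_ne_zero_iff_ne_and_reachable.2 ⟨hvr, hG v r⟩
  obtain ⟨p, hp⟩ := SimpleGraph.exists_walk_of_dist_ne_zero hdist
  cases p with
  | nil => exact absurd hp.symm hdist
  | @cons _ u _ hadj q =>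
    have : G.dist u r ≤ q.length := SimpleGraph.dist_le q
    have : G.dist v r ≤ G.dist v u + G.dist u r := hG.dist_triangle
    have : G.dist v u = 1 := SimpleGraph.dist_eq_one_iff_adj.2 hadj
    simp only [SimpleGraph.Walk.length_cons] at hp
    exact ⟨u, hadj, by omega⟩

lemma notMem_SBstar_of_adj_of_dist_succ (hG : G.Connected) {v u : V} (hv : v ∉ SBstar G r B)
    (hadj : G.Adj v u) (hu : G.dist u r + 1 = G.dist v r) : u ∉ SBstar G r B := by
  rintro ⟨b, hb, hlt⟩
  have : G.dist v b ≤ G.dist v u + G.dist u b := hG.dist_triangle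
  have : G.dist v u = 1 := SimpleGraph.dist_eq_one_iff_adj.2 hadj
  exact hv ⟨b, hb, by omega⟩

variable {D : ℕ} {ℓ : V → ℕ}

lemma IPred.distS_le (hI : IPred G r B D ℓ) (hD : ∀ u w, G.dist u w ≤ D) (v : V) :
    distS G v (B ∪ {r}) ≤ ℓ v := by
  have := hI v
  have := distS_le_dist_s11 (G := G) v (show r ∈ B ∪ {r} by simp)
  have := hD v r
  omega

lemma IPred.dist_le_succ_of_adj (hI : IPred G r B D ℓ) (hD : ∀ u w, G.dist u w ≤ D)
    (hG : G.Connected) {v q : V} (hv : v ∉ SBstar G r B) (hq : G.Adj v q) :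
    G.dist v r ≤ ℓ q + 1 := by
  rw [← distS_eq_dist_of_notMem_SBstar hv]
  exact (distS_le_succ_of_adj hG ⟨r, by simp⟩ hq).trans (Nat.add_le_add_right (hI.distS_le hD q) 1)

lemma Spec.le_succ_of_adj {prnt : V → Option V} {v q : V} (h : Spec G r B ℓ prnt v)
    (hvr : v ≠ r) (hq : G.Adj v q) : ℓ v ≤ ℓ q + 1 := by
  obtain ⟨k, w, ⟨hk, -, -, -, hpath⟩, rfl⟩ := h.2 hvr
  obtain ⟨-, -, hsucc, hmin⟩ := hpath k hk le_rfl
  have : ℓ (w (k - 1)) ≤ ℓ q := hmin ▸ Nat.sInf_le ⟨q, hq, rfl⟩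
  omega

end Distance

section Step

variable {G : SimpleGraph V} {r : V} {B : Set V} {num : V → ℕ}

lemma StepRR.output_cases {ρ ρ' : Config V} {S : Set V} (h : StepRR G r B num ρ ρ' S) {v : V}
    (hv : v ∉ B) :
    (ρ'.lvl v = ρ.lvl v ∧ ρ'.prnt v = ρ.prnt v) ∨
    (v = r ∧ ρ'.lvl v = 0 ∧ ρ'.prnt v = none) ∨
    (v ≠ r ∧ Enabled G r ρ v ∧ ∃ p, IsChoice num (currIdx num ρ v) (minNbrs G ρ v) p ∧
      ρ'.prnt v = some p ∧ ρ'.lvl v = ρ.lvl p + 1) := by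
  obtain ⟨hidle, hactive⟩ := h v hv
  by_cases hS : v ∈ S
  · obtain ⟨hroot, hnonroot⟩ := hactive hS
    by_cases hvr : v = r
    · exact .inr (.inl ⟨hvr, hroot hvr⟩)
    by_cases hE : Enabled G r ρ v
    · exact .inr (.inr ⟨hvr, hE, (hnonroot hvr).1 hE⟩)
    · exact .inl ((hnonroot hvr).2 hE)
  · exact .inl (hidle hS)

lemma IPred.step {D : ℕ} (hG : G.Connected) {ρ ρ' : Config V} {S : Set V}
    (h : StepRR G r B num ρ ρ' S) (hI : IPred G r B D ρ.lvl) : IPred G r B D ρ'.lvl := by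
  intro v
  by_cases hv : v ∈ B ∪ {r}
  · show min D _ ≤ _
    rw [distS_eq_zero hv]
    exact (min_le_right _ _).trans (Nat.zero_le _)
  rcases h.output_cases (fun hvB => hv (.inl hvB)) with
    ⟨hlvl, -⟩ | ⟨hvr, -⟩ | ⟨-, -, p, ⟨⟨hadj, -⟩, -⟩, -, hlvl⟩
  · exact hlvl ▸ hI v
  · exact absurd (.inr hvr) hv
  · have := hI p
    have := distS_le_succ_of_adj hG (S := B ∪ {r}) ⟨r, by simp⟩ hadj
    omega

end Step

def LevelsSettled (G : SimpleGraph V) (r : V) (B : Set V) (D : ℕ) (ρ : Config V) : Prop :=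
  IPred G r B D ρ.lvl ∧ ∀ x, x ∉ SBstar G r B → ρ.lvl x = G.dist x r

section Execution

variable {G : SimpleGraph V} {r : V} {B : Set V} {num : V → ℕ} {e : ℕ → Config V}
  {A : ℕ → Set V} {D : ℕ}

lemma IsExecRR.iPred (hexec : IsExecRR G r B num e A) (hG : G.Connected)
    (hI : IPred G r B D (e 0).lvl) (n : ℕ) : IPred G r B D (e n).lvl := by
  induction n with
  | zero => exact hI
  | succ n ih => exact ih.step hG (hexec n)

lemma IsExecRR.root_output (hexec : IsExecRR G r B num e A) (hrB : r ∉ B)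
    (h0 : (e 0).lvl r = 0 ∧ (e 0).prnt r = none) (n : ℕ) :
    (e n).lvl r = 0 ∧ (e n).prnt r = none := by
  induction n with
  | zero => exact h0
  | succ n ih =>
    rcases (hexec n).output_cases hrB with ⟨hlvl, hprnt⟩ | ⟨-, h⟩ | ⟨hrr, -⟩
    · exact hlvl ▸ hprnt ▸ ih
    · exact h
    · exact absurd rfl hrr

lemma lvl_eq_dist_of_legitStar (hG : G.Connected) (hrB : r ∉ B) (hD : ∀ u w, G.dist u w ≤ D)
    {ρ : Config V} (hleg : LegitStar G r B ρ) (hI : IPred G r B D ρ.lvl) {v : V}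
    (hv : v ∉ SBstar G r B) : ρ.lvl v = G.dist v r := by
  induction hL : G.dist v r generalizing v with
  | zero =>
    obtain rfl := hG.dist_eq_zero_iff.mp hL
    exact ((hleg v (notMem_of_notMem_SBstar hG hrB hv) hv).1 rfl).2
  | succ L ih =>
    have hvr : v ≠ r := by rintro rfl; simp at hL
    obtain ⟨u, hadj, hu⟩ := exists_adj_dist_succ hG hvr
    have hlvlu := ih (notMem_SBstar_of_adj_of_dist_succ hG hv hadj hu) (by omega)
    have hupper := (hleg v (notMem_of_notMem_SBstar hG hrB hv) hv).le_succ_of_adj hvr hadj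
    have hlower := hI.distS_le hD v
    rw [distS_eq_dist_of_notMem_SBstar hv] at hlower
    omega

lemma IsExecRR.lvl_eq_dist (hexec : IsExecRR G r B num e A) (hG : G.Connected) (hrB : r ∉ B)
    (hD : ∀ u w, G.dist u w ≤ D) (hleg : LegitStar G r B (e 0)) (hI : IPred G r B D (e 0).lvl)
    (n : ℕ) {v : V} (hv : v ∉ SBstar G r B) : (e n).lvl v = G.dist v r := by
  induction n generalizing v with
  | zero => exact lvl_eq_dist_of_legitStar hG hrB hD hleg hI hv
  | succ n ih =>
    rcases (hexec n).output_cases (notMem_of_notMem_SBstar hG hrB hv) with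
      ⟨hlvl, -⟩ | ⟨rfl, hlvl, -⟩ | ⟨hvr, -, p, ⟨⟨hadj, hmin⟩, -⟩, -, hlvl⟩
    · exact hlvl ▸ ih hv
    · simp [hlvl]
    · obtain ⟨u, hadju, hu⟩ := exists_adj_dist_succ hG hvr
      have := ih (notMem_SBstar_of_adj_of_dist_succ hG hv hadju hu)
      have := hmin u hadju
      have := (hexec.iPred hG hI n).dist_le_succ_of_adj hD hG hv hadj
      omega

lemma IsExecRR.levelsSettled (hexec : IsExecRR G r B num e A) (hG : G.Connected) (hrB : r ∉ B)
    (hD : ∀ u w, G.dist u w ≤ D) (hleg : LegitStar G r B (e 0)) (hI : IPred G r B D (e 0).lvl)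
    (n : ℕ) : LevelsSettled G r B D (e n) :=
  ⟨hexec.iPred hG hI n, fun _ hx => hexec.lvl_eq_dist hG hrB hD hleg hI n hx⟩

end Execution

section Settled

variable {G : SimpleGraph V} {r : V} {B : Set V} {D : ℕ} {ρ : Config V} {v u : V}

lemma LevelsSettled.mem_minNbrs (hρ : LevelsSettled G r B D ρ) (hG : G.Connected)
    (hD : ∀ u w, G.dist u w ≤ D) (hv : v ∉ SBstar G r B) (hadj : G.Adj v u)
    (hu : G.dist u r + 1 = G.dist v r) : u ∈ minNbrs G ρ v := by
  refine ⟨hadj, fun q hq => ?_⟩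
  have := hρ.1.dist_le_succ_of_adj hD hG hv hq
  rw [hρ.2 u (notMem_SBstar_of_adj_of_dist_succ hG hv hadj hu)]
  omega

lemma LevelsSettled.not_enabled (hρ : LevelsSettled G r B D ρ) (hG : G.Connected)
    (hD : ∀ u w, G.dist u w ≤ D) (hv : v ∉ SBstar G r B) (hadj : G.Adj v u)
    (hu : G.dist u r + 1 = G.dist v r) (hprnt : ρ.prnt v = some u) : ¬ Enabled G r ρ v := by
  have hvr : v ≠ r := by rintro rfl; simp at hu
  have hmin := hρ.mem_minNbrs hG hD hv hadj hu
  refine fun hE => hE.2 hvr ⟨u, hprnt, hadj, ?_, hmin.2⟩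
  rw [hρ.2 v hv, hρ.2 u (notMem_SBstar_of_adj_of_dist_succ hG hv hadj hu), hu]

end Settled

section RoundRobin

variable (num : V → ℕ) (u : V) (M : ℕ)

/-- Rank of `p` in the cyclic order of the round robin that starts right after `u` and ends
with `u`, for `M` larger than every `num`. -/
def rrKey (p : V) : ℕ := if num u < num p then num p else num p + M

def parentKey (ρ : Config V) (v : V) : ℕ := (ρ.prnt v).elim 0 (rrKey num u M)

variable {num u M}

lemma rrKey_pos (hM : num u < M) (p : V) : 0 < rrKey num u M p := by
  unfold rrKey
  split_ifs <;> omega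

lemma rrKey_lt_of_isChoice (hnum : Function.Injective num) (hM : ∀ x, num x < M) {S : Set V}
    (hu : u ∈ S) {c p : V} (hc : c ≠ u) (hp : IsChoice num (num c) S p) :
    rrKey num u M c < rrKey num u M p := by
  obtain ⟨-, hafter, hwrap⟩ := hp
  have hcu : num c ≠ num u := hnum.ne hc
  have := hM c
  unfold rrKey
  rcases lt_or_gt_of_ne hcu with hlt | hgt
  · obtain ⟨hcp, hpu⟩ := hafter ⟨u, hu, hlt⟩
    have := hpu u hu hlt
    split_ifs <;> omega
  · by_cases hnext : ∃ a ∈ S, num c < num a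
    · have := (hafter hnext).1
      split_ifs <;> omega
    · push Not at hnext
      have := hwrap hnext u hu
      split_ifs <;> omega

end RoundRobin

def ChangesOutput (e : ℕ → Config V) (v : V) (i : ℕ) : Prop :=
  (e (i + 1)).lvl v ≠ (e i).lvl v ∨ (e (i + 1)).prnt v ≠ (e i).prnt v

instance [DecidableEq V] (e : ℕ → Config V) (v : V) : DecidablePred (ChangesOutput e v) :=
  fun _ => instDecidableOr

section Moves

open Finset

variable {G : SimpleGraph V} {r : V} {B : Set V} {num : V → ℕ} {D : ℕ}

lemma StepRR.parentKey_lt {ρ ρ' : Config V} {S : Set V} (h : StepRR G r B num ρ ρ' S)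
    (hρ : LevelsSettled G r B D ρ) (hG : G.Connected) (hrB : r ∉ B) (hD : ∀ u w, G.dist u w ≤ D)
    (hnum : Function.Injective num) {M : ℕ} (hM : ∀ x, num x < M) {v u : V}
    (hv : v ∉ SBstar G r B) (hadj : G.Adj v u) (hu : G.dist u r + 1 = G.dist v r)
    (hchg : ρ'.lvl v ≠ ρ.lvl v ∨ ρ'.prnt v ≠ ρ.prnt v) :
    parentKey num u M ρ v < parentKey num u M ρ' v ∧ ∃ p, G.Adj v p ∧ ρ'.prnt v = some p := by
  rcases h.output_cases (notMem_of_notMem_SBstar hG hrB hv) with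
    ⟨hlvl, hprnt⟩ | ⟨rfl, -⟩ | ⟨-, hE, p, hp, hprnt', -⟩
  · exact hchg.elim (absurd hlvl) (absurd hprnt)
  · simp at hu
  refine ⟨?_, p, hp.1.1, hprnt'⟩
  rw [parentKey, parentKey, hprnt']
  cases hc : ρ.prnt v with
  | none => exact rrKey_pos (hM u) p
  | some c =>
    have hcu : c ≠ u := by
      rintro rfl
      exact hρ.not_enabled hG hD hv hadj hu hc hE
    have hidx : currIdx num ρ v = num c := by simp [currIdx, hc]
    exact rrKey_lt_of_isChoice hnum hM (hρ.mem_minNbrs hG hD hv hadj hu) hcu (hidx ▸ hp)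

variable {e : ℕ → Config V} {A : ℕ → Set V}

lemma IsExecRR.card_changesOutput_le_degree [Fintype V] [DecidableEq V] [DecidableRel G.Adj]
    (hexec : IsExecRR G r B num e A) (hG : G.Connected) (hrB : r ∉ B)
    (hD : ∀ u w, G.dist u w ≤ D) (hnum : Function.Injective num) (hleg : LegitStar G r B (e 0))
    (hI : IPred G r B D (e 0).lvl) {v : V} (hv : v ∉ SBstar G r B) (n : ℕ) :
    #{i ∈ range n | ChangesOutput e v i} ≤ G.degree v := by
  by_cases hvr : v = r
  · subst hvr
    obtain ⟨hprnt0, hlvl0⟩ := (hleg v (notMem_of_notMem_SBstar hG hrB hv) hv).1 rfl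
    have hroot := hexec.root_output hrB ⟨hlvl0, hprnt0⟩
    refine (card_eq_zero.mpr (filter_eq_empty_iff.mpr fun i _ hi => ?_)).trans_le
      (Nat.zero_le _)
    exact hi.elim (· ((hroot _).1.trans (hroot i).1.symm)) (· ((hroot _).2.trans (hroot i).2.symm))
  obtain ⟨u, hadj, hu⟩ := exists_adj_dist_succ hG hvr
  obtain ⟨M, hM⟩ : ∃ M, ∀ x, num x < M :=
    ⟨univ.sup num + 1, fun x => Nat.lt_succ_of_le (le_sup (mem_univ x))⟩
  have hstep (i : ℕ) (hi : ChangesOutput e v i) :=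
    (hexec i).parentKey_lt (hexec.levelsSettled hG hrB hD hleg hI i) hG hrB hD hnum hM hv hadj hu hi
  have hmono : Monotone fun n => parentKey num u M (e n) v := by
    refine monotone_nat_of_le_succ fun i => ?_
    by_cases hi : ChangesOutput e v i
    · exact (hstep i hi).1.le
    · rw [ChangesOutput, not_or, not_not, not_not] at hi
      rw [parentKey, parentKey, hi.2]
  have hinj : Set.InjOn (fun i => (e (i + 1)).prnt v) {i | ChangesOutput e v i} :=
    Set.InjOn.of_comp (g := fun o => o.elim 0 (rrKey num u M)) <| StrictMonoOn.injOn
      fun i _ j hj hij => (hmono (Nat.succ_le_of_lt hij)).trans_lt (hstep j hj).1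
  calc #{i ∈ range n | ChangesOutput e v i}
      ≤ #((G.neighborFinset v).map .some) := by
        refine card_le_card_of_injOn _ (fun i hi => ?_)
          (hinj.mono fun i hi => (mem_filter.1 hi).2)
        obtain ⟨p, hp, hprnt⟩ := (hstep i (mem_filter.1 hi).2).2
        rw [mem_coe, hprnt]
        exact mem_map_of_mem _ ((G.mem_neighborFinset v p).2 hp)
    _ = G.degree v := by rw [card_map, SimpleGraph.card_neighborFinset_eq_degree]

end Moves

section Disruptions

open Finset

variable {G : SimpleGraph V} {r : V} {B : Set V} {num : V → ℕ} {e : ℕ → Config V}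

lemma IsDisruption.stop_le_start_of_lt {i t i' t' : ℕ} (h : IsDisruption G r B num e i t)
    (h' : IsDisruption G r B num e i' t') (hlt : i < i') : t ≤ i' :=
  not_lt.1 fun hi't => h.2.2.2.2.2.1 i' hlt hi't ⟨h'.2.1, h'.2.2.1⟩

open scoped Classical in
lemma card_filter_isDisruption_le [Fintype V] [DecidableEq V] {c : V → ℕ}
    (hmoves : ∀ v, v ∉ SBstar G r B → ∀ N, #{j ∈ range N | ChangesOutput e v j} ≤ c v) (n : ℕ) :
    #{i ∈ range n | ∃ t, IsDisruption G r B num e i t} ≤ ∑ v, c v := by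
  have hK (N : ℕ) : #{j ∈ range N | ∃ v, v ∉ SBstar G r B ∧ ChangesOutput e v j} ≤ ∑ v, c v := by
    refine (card_filter_exists_le_sum _).trans (sum_le_sum fun v _ => ?_)
    by_cases hv : v ∈ SBstar G r B
    · simp [hv]
    · exact (card_le_card (monotone_filter_right _ fun j _ hj => hj.2)).trans (hmoves v hv N)
  have hmove (i : ℕ) (hi : ∃ t, IsDisruption G r B num e i t) : ∃ j t,
      IsDisruption G r B num e i t ∧ i ≤ j ∧ j < t ∧ ∃ v, v ∉ SBstar G r B ∧ ChangesOutput e v j := by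
    obtain ⟨t, ht⟩ := hi
    obtain ⟨j, v, hij, hjt, -, hv, hchg⟩ := ht.2.2.2.2.2.2
    exact ⟨j, t, ht, hij, hjt, v, hv, hchg⟩
  choose! J T hJ using hmove
  refine card_le_of_injOn_of_card_filter_range_le hK
    (fun i hi => (hJ i (mem_filter.1 hi).2).2.2.2) (StrictMonoOn.injOn fun i hi i' hi' hlt => ?_)
  obtain ⟨hdis, -, hJT, -⟩ := hJ i (mem_filter.1 hi).2
  obtain ⟨hdis', hJ', -⟩ := hJ i' (mem_filter.1 hi').2
  have := hdis.stop_le_start_of_lt hdis' hlt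
  omega

end Disruptions

end BFS

open BFS in
open scoped Classical in
/-- Any configuration of `LC*` is `(2m, Δ, S_B*, n−1)`-TA time contained: in any
execution of `SSBFS` from such a configuration, each `S_B*`-correct vertex changes
its output variables at most `Δ` times, and the number of `S_B*`-TA-disruptions is
at most `2m`. -/
theorem stmt11 {V : Type*} [Fintype V] [DecidableEq V] (G : SimpleGraph V)
    [DecidableRel G.Adj] (hG : G.Connected)
    (r : V) (B : Set V) (hrB : r ∉ B) (D : ℕ) (hD : ∀ u w, G.dist u w ≤ D)
    (num : V → ℕ) (hnum : Function.Injective num)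
    (e : ℕ → BFS.Config V) (A : ℕ → Set V) (hexec : BFS.IsExecRR G r B num e A)
    (hleg : BFS.LegitStar G r B (e 0))
    (hI : BFS.IPred G r B D (e 0).lvl) :
    (∀ v, v ∉ B → v ∉ BFS.SBstar G r B → ∀ n,
        ((Finset.range n).filter
          (fun i => (e (i + 1)).lvl v ≠ (e i).lvl v ∨ (e (i + 1)).prnt v ≠ (e i).prnt v)).card
        ≤ G.maxDegree) ∧
    (∀ n, ((Finset.range n).filter
        (fun i => ∃ t, BFS.IsDisruption G r B num e i t)).card
      ≤ 2 * G.edgeFinset.card) := by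
  have hmoves (v : V) (hv : v ∉ SBstar G r B) (n : ℕ) :=
    hexec.card_changesOutput_le_degree hG hrB hD hnum hleg hI hv n
  refine ⟨fun v _ hv n => ?_, fun n => ?_⟩
  · exact (hmoves v hv n).trans (G.degree_le_maxDegree v)
  · exact (card_filter_isDisruption_le hmoves n).trans_eq G.sum_degrees_eq_twice_card_edges
end

section
/- On the 6-vertex graph V = {r,u,u',v,v',b} with edges {r,u},{r,u'},{u,v},{u',v'},{v,b},{v',b}, given ℓ(r)=ℓ(b)=0, prnt(r)=prnt(b)=⊥, the unique configuration in which all of u, u', v, v' satisfy the BFS specification is prnt(u)=prnt(u')=r, prnt(v)=prnt(v')=b, with ℓ(u)=ℓ(u')=ℓ(v)=ℓ(v')=1. -/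
/-- The 6-vertex graph of the optimality proof: vertices `0 = r`, `1 = u`, `2 = u'`,
`3 = v`, `4 = v'`, `5 = b`, edges `{r,u},{r,u'},{u,v},{u',v'},{v,b},{v',b}`. -/
def G6 : SimpleGraph (Fin 6) :=
  SimpleGraph.fromRel (fun x y =>
    (x, y) ∈ ({(0, 1), (0, 2), (1, 3), (2, 4), (3, 5), (4, 5)} : Set (Fin 6 × Fin 6)))

/-!
A non-root vertex meeting the specification has positive level, one more than its parent's.
Each of `u, u', v, v'` is adjacent to exactly one of `r, b`, which has level `0`, and otherwise
only to vertices among `u, u', v, v'`, which then have positive levels. The parent, having the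
least level among the neighbours, must be that root, and the level is `1`. Conversely, such a
configuration is witnessed by BFS paths of one edge.
-/

namespace BFS

variable {V : Type*} {G : SimpleGraph V} {r : V} {B : Set V} {ℓ : V → ℕ}
  {prnt : V → Option V} {v a : V}

theorem Spec.exists_parent (h : Spec G r B ℓ prnt v) (hv : v ≠ r) :
    ∃ p, prnt v = some p ∧ G.Adj p v ∧ ℓ v = ℓ p + 1 ∧
      ℓ p = sInf (ℓ '' G.neighborSet v) := by
  obtain ⟨k, w, ⟨hk, -, -, -, hstep⟩, rfl⟩ := h.2 hv
  exact ⟨w (k - 1), hstep k hk le_rfl⟩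

theorem Spec.level_pos (h : Spec G r B ℓ prnt v) (hv : v ≠ r) : 0 < ℓ v := by
  obtain ⟨p, -, -, hlv, -⟩ := h.exists_parent hv
  omega

theorem Spec.parent_eq_of_forall_adj (h : Spec G r B ℓ prnt v) (hv : v ≠ r)
    (ha : G.Adj v a) (hla : ℓ a = 0) (hpos : ∀ y, G.Adj v y → y ≠ a → 0 < ℓ y) :
    prnt v = some a ∧ ℓ v = 1 := by
  obtain ⟨p, hp, hpv, hlv, hlp⟩ := h.exists_parent hv
  have hlp0 : ℓ p = 0 := hlp.trans (Nat.sInf_eq_zero.2 (.inl ⟨a, ha, hla⟩))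
  obtain rfl : p = a := by
    by_contra hne
    exact (hpos p hpv.symm hne).ne' hlp0
  exact ⟨hp, by omega⟩

theorem spec_of_parent_eq (ha : a ∈ B ∪ {r}) (hpa : prnt a = none) (hla : ℓ a = 0)
    (hv : v ≠ r) (hav : G.Adj a v) (hp : prnt v = some a) (hlv : ℓ v = 1) :
    Spec G r B ℓ prnt v := by
  refine ⟨fun h => absurd h hv, fun _ => ⟨1, fun i => if i = 0 then a else v, ?_, rfl⟩⟩
  refine ⟨le_rfl, hpa, hla, ha, fun i hi hi' => ?_⟩
  obtain rfl : i = 1 := le_antisymm hi' hi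
  have hmin : sInf (ℓ '' G.neighborSet v) = 0 := Nat.sInf_eq_zero.2 (.inl ⟨a, hav.symm, hla⟩)
  exact ⟨hp, hav, by simp [hlv, hla], hla.trans hmin.symm⟩

end BFS

/-- The one of `r = 0`, `b = 5` adjacent to a middle vertex `x ∈ {u, u', v, v'}`. -/
def G6.anchor (x : Fin 6) : Fin 6 := if x ≤ 2 then 0 else 5

theorem G6.adj_anchor : ∀ x ∈ ({1, 2, 3, 4} : Set (Fin 6)), G6.Adj x (G6.anchor x) := by
  intro x hx
  fin_cases x <;> simp_all [G6, G6.anchor, SimpleGraph.fromRel_adj]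

theorem G6.eq_anchor_or_mem_of_adj : ∀ x ∈ ({1, 2, 3, 4} : Set (Fin 6)), ∀ y, G6.Adj x y →
    y = G6.anchor x ∨ y ∈ ({1, 2, 3, 4} : Set (Fin 6)) := by
  intro x hx y
  fin_cases x <;> fin_cases y <;> simp_all [G6, G6.anchor, SimpleGraph.fromRel_adj]

open BFS in
/-- On the 6-vertex graph, given `ℓ(r) = ℓ(b) = 0` and `prnt(r) = prnt(b) = ⊥`, the
unique configuration in which all of `u`, `u'`, `v`, `v'` satisfy the BFS
specification is `prnt(u) = prnt(u') = r`, `prnt(v) = prnt(v') = b` and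
`ℓ(u) = ℓ(u') = ℓ(v) = ℓ(v') = 1`. -/
theorem stmt15 (ℓ : Fin 6 → ℕ) (prnt : Fin 6 → Option (Fin 6))
    (hr : prnt 0 = none ∧ ℓ 0 = 0) (hb : prnt 5 = none ∧ ℓ 5 = 0) :
    (∀ w ∈ ({1, 2, 3, 4} : Set (Fin 6)), BFS.Spec G6 0 {5} ℓ prnt w) ↔
      (prnt 1 = some 0 ∧ prnt 2 = some 0 ∧ prnt 3 = some 5 ∧ prnt 4 = some 5 ∧
        ℓ 1 = 1 ∧ ℓ 2 = 1 ∧ ℓ 3 = 1 ∧ ℓ 4 = 1) := by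
  have hanchor : ∀ x, G6.anchor x ∈ ({5} : Set (Fin 6)) ∪ {0} ∧
      prnt (G6.anchor x) = none ∧ ℓ (G6.anchor x) = 0 := by
    intro x
    unfold G6.anchor
    split_ifs
    exacts [⟨by simp, hr⟩, ⟨by simp, hb⟩]
  have hne : ∀ x ∈ ({1, 2, 3, 4} : Set (Fin 6)), x ≠ 0 := by
    rintro x hx rfl
    simp at hx
  constructor
  · intro h
    have key : ∀ x ∈ ({1, 2, 3, 4} : Set (Fin 6)), prnt x = some (G6.anchor x) ∧ ℓ x = 1 :=
      fun x hx => (h x hx).parent_eq_of_forall_adj (hne x hx) (G6.adj_anchor x hx)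
        (hanchor x).2.2 fun y hxy hy =>
          have hyS := (G6.eq_anchor_or_mem_of_adj x hx y hxy).resolve_left hy
          (h y hyS).level_pos (hne y hyS)
    obtain ⟨p1, l1⟩ := key 1 (by simp)
    obtain ⟨p2, l2⟩ := key 2 (by simp)
    obtain ⟨p3, l3⟩ := key 3 (by simp)
    obtain ⟨p4, l4⟩ := key 4 (by simp)
    exact ⟨p1, p2, p3, p4, l1, l2, l3, l4⟩
  · rintro ⟨p1, p2, p3, p4, l1, l2, l3, l4⟩ x hx
    have hpx : prnt x = some (G6.anchor x) ∧ ℓ x = 1 := by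
      rcases hx with rfl | rfl | rfl | rfl
      exacts [⟨p1, l1⟩, ⟨p2, l2⟩, ⟨p3, l3⟩, ⟨p4, l4⟩]
    exact spec_of_parent_eq (hanchor x).1 (hanchor x).2.1 (hanchor x).2.2 (hne x hx)
      (G6.adj_anchor x hx).symm hpx.1 hpx.2
end

section
/- In any configuration where ℓ(v) = d(v,r) for all v ∉ S_B and every neighbor p of any such v satisfies ℓ(p) ≥ d(v,r) − 1, no vertex v ∉ S_B ∪ {r} with prnt(v) pointing to a neighbor u with ℓ(u) = d(v,r) − 1 = min over neighbors is enabled under the min+1 rule; hence vertices outside S_B never change output variables (the (S_B, n−1)-containment property). -/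
/-! The invariant `I_D` is closed under steps: a correct vertex only ever resets to `0` at the
root or copies a neighbour's level plus one, and the distance to `B ∪ {r}` changes by at most
one along an edge. Under `I_D`, every neighbour of a vertex `v ∉ S_B` has level at least
`d(v,r) − 1`, so `v`, sitting at level `d(v,r)` and pointing to a neighbour at level
`d(v,r) − 1`, is not enabled. That parent is itself outside `S_B`, since otherwise `I_D` would
force its level up to `d(v,r)`; hence the whole configuration outside `S_B` stays frozen. -/

namespace BFS

variable {V : Type*} {G : SimpleGraph V} {r : V} {B S : Set V} {D : ℕ} {v u : V}

lemma distS_le {b : V} (hb : b ∈ S) : distS G v S ≤ G.dist v b :=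
  Nat.sInf_le ⟨b, hb, rfl⟩

lemma le_distS (hS : S.Nonempty) {c : ℕ} (h : ∀ b ∈ S, c ≤ G.dist v b) : c ≤ distS G v S :=
  le_csInf (hS.image _) (by rintro _ ⟨b, hb, rfl⟩; exact h b hb)

lemma distS_eq_zero_of_mem (hv : v ∈ S) : distS G v S = 0 :=
  Nat.le_zero.mp (SimpleGraph.dist_self (G := G) (v := v) ▸ distS_le hv)

lemma _root_.SimpleGraph.Connected.distS_le_distS_add_one (hG : G.Connected)
    (hS : S.Nonempty) (hvu : G.Adj v u) : distS G v S ≤ distS G u S + 1 := by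
  obtain ⟨b, hb, hub⟩ := Nat.sInf_mem (hS.image (G.dist u))
  calc distS G v S ≤ G.dist v b := distS_le hb
    _ ≤ G.dist v u + G.dist u b := hG.dist_triangle
    _ = distS G u S + 1 := by
      rw [SimpleGraph.dist_eq_one_iff_adj.mpr hvu, distS, ← hub, add_comm]

lemma union_singleton_nonempty (B : Set V) (r : V) : (B ∪ {r}).Nonempty :=
  ⟨r, Set.mem_union_right _ rfl⟩

lemma subset_SB : B ⊆ SB G r B :=
  fun b hb => ⟨b, hb, by simp⟩

lemma dist_lt_of_notMem_SB (hv : v ∉ SB G r B) {b : V} (hb : b ∈ B) :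
    G.dist v r < G.dist v b :=
  not_le.mp fun h => hv ⟨b, hb, h⟩

lemma dist_le_of_adj_of_notMem_SB (hG : G.Connected) (hv : v ∉ SB G r B) (hvu : G.Adj v u)
    {b : V} (hb : b ∈ B) : G.dist v r ≤ G.dist u b := by
  have := hG.dist_triangle (u := v) (v := u) (w := b)
  have := dist_lt_of_notMem_SB hv hb
  rw [SimpleGraph.dist_eq_one_iff_adj.mpr hvu] at *
  omega

lemma distS_eq_dist_of_notMem_SB (hv : v ∉ SB G r B) : distS G v (B ∪ {r}) = G.dist v r := by
  refine le_antisymm (distS_le (Set.mem_union_right _ rfl))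
    (le_distS (union_singleton_nonempty B r) ?_)
  rintro b (hb | rfl)
  · exact (dist_lt_of_notMem_SB hv hb).le
  · rfl

namespace IPred

variable {ℓ : V → ℕ}

lemma le_of_adj (hI : IPred G r B D ℓ) (hG : G.Connected) (hv : v ∉ SB G r B)
    (hD : G.dist v r ≤ D) (hvu : G.Adj v u) : G.dist v r - 1 ≤ ℓ u := by
  have := hI u
  have := hG.distS_le_distS_add_one (union_singleton_nonempty B r) hvu
  rw [distS_eq_dist_of_notMem_SB hv] at this
  omega

lemma notMem_SB_of_adj (hI : IPred G r B D ℓ) (hG : G.Connected) (hv : v ∉ SB G r B)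
    (hD : G.dist v r ≤ D) (hvu : G.Adj v u) (hlt : ℓ u < G.dist v r) : u ∉ SB G r B := by
  rintro ⟨b, hb, hbu⟩
  have hfar : G.dist v r ≤ distS G u (B ∪ {r}) := by
    refine le_distS (union_singleton_nonempty B r) ?_
    rintro c (hc | rfl)
    · exact dist_le_of_adj_of_notMem_SB hG hv hvu hc
    · exact (dist_le_of_adj_of_notMem_SB hG hv hvu hb).trans hbu
  have := hI u
  omega

end IPred

lemma StepM.lvl_eq {ρ ρ' : Config V} {A : Set V} (h : StepM G r B ρ ρ' A) (hv : v ∉ B) :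
    ρ'.lvl v = ρ.lvl v ∨ (v = r ∧ ρ'.lvl v = 0) ∨ ∃ p, G.Adj v p ∧ ρ'.lvl v = ρ.lvl p + 1 := by
  obtain ⟨hidle, hactive⟩ := h v hv
  by_cases hvA : v ∈ A
  · obtain ⟨hroot, hnonroot⟩ := hactive hvA
    by_cases hvr : v = r
    · exact Or.inr (Or.inl ⟨hvr, (hroot hvr).1⟩)
    · obtain ⟨hen, hnen⟩ := hnonroot hvr
      by_cases hE : Enabled G r ρ v
      · obtain ⟨p, ⟨hvp, -⟩, -, hlvl⟩ := hen hE
        exact Or.inr (Or.inr ⟨p, hvp, hlvl⟩)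
      · exact Or.inl (hnen hE).1
  · exact Or.inl (hidle hvA).1

lemma StepM.eq_of_not_enabled {ρ ρ' : Config V} {A : Set V} (h : StepM G r B ρ ρ' A)
    (hv : v ∉ B) (hE : ¬ Enabled G r ρ v) : ρ'.lvl v = ρ.lvl v ∧ ρ'.prnt v = ρ.prnt v := by
  obtain ⟨hidle, hactive⟩ := h v hv
  by_cases hvA : v ∈ A
  · obtain ⟨hroot, hnonroot⟩ := hactive hvA
    by_cases hvr : v = r
    · have hr : ρ.prnt v = none ∧ ρ.lvl v = 0 := by
        by_contra hne
        exact hE ⟨fun _ => not_and_or.mp hne, fun hvr' => absurd hvr hvr'⟩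
      obtain ⟨h1, h2⟩ := hroot hvr
      exact ⟨h1.trans hr.2.symm, h2.trans hr.1.symm⟩
    · exact (hnonroot hvr).2 hE
  · exact hidle hvA

lemma IPred.stepM {ρ ρ' : Config V} {A : Set V} (hG : G.Connected) (hI : IPred G r B D ρ.lvl)
    (h : StepM G r B ρ ρ' A) : IPred G r B D ρ'.lvl := by
  intro v
  by_cases hvB : v ∈ B
  · have := distS_eq_zero_of_mem (G := G) (Set.mem_union_left {r} hvB)
    omega
  rcases h.lvl_eq hvB with hsame | ⟨rfl, hzero⟩ | ⟨p, hvp, hlvl⟩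
  · exact hsame ▸ hI v
  · have := distS_eq_zero_of_mem (G := G) (Set.mem_union_right B (Set.mem_singleton v))
    omega
  · have := hG.distS_le_distS_add_one (union_singleton_nonempty B r) hvp
    have := hI p
    omega

lemma IPred.isExecM {e : ℕ → Config V} {A : ℕ → Set V} (hG : G.Connected)
    (hexec : IsExecM G r B e A) (hI : IPred G r B D (e 0).lvl) (n : ℕ) :
    IPred G r B D (e n).lvl := by
  induction n with
  | zero => exact hI
  | succ n ih => exact ih.stepM hG (hexec n)

def IsSBLegit (G : SimpleGraph V) (r : V) (B : Set V) (ρ : Config V) : Prop :=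
  ∀ v ∉ SB G r B, ρ.lvl v = G.dist v r ∧ (v = r → ρ.prnt v = none) ∧
    (v ≠ r → ∃ u, ρ.prnt v = some u ∧ G.Adj v u ∧ ρ.lvl u = G.dist v r - 1)

namespace IsSBLegit

variable {ρ ρ' : Config V}

lemma not_enabled (h : IsSBLegit G r B ρ) (hG : G.Connected) (hD : ∀ v, G.dist v r ≤ D)
    (hI : IPred G r B D ρ.lvl) (hv : v ∉ SB G r B) : ¬ Enabled G r ρ v := by
  obtain ⟨hlvl, hroot, hprnt⟩ := h v hv
  rintro ⟨hEroot, hEother⟩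
  by_cases hvr : v = r
  · subst hvr
    rcases hEroot rfl with hp | hl
    · exact hp (hroot rfl)
    · exact hl (hlvl.trans SimpleGraph.dist_self)
  · obtain ⟨u, hpu, hvu, hlu⟩ := hprnt hvr
    have := hG.pos_dist_of_ne hvr
    exact hEother hvr ⟨u, hpu, hvu, by omega,
      fun q hvq => hlu ▸ hI.le_of_adj hG hv (hD v) hvq⟩

lemma of_agree (h : IsSBLegit G r B ρ) (hG : G.Connected) (hD : ∀ v, G.dist v r ≤ D)
    (hI : IPred G r B D ρ.lvl)
    (hagree : ∀ v ∉ SB G r B, ρ'.lvl v = ρ.lvl v ∧ ρ'.prnt v = ρ.prnt v) :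
    IsSBLegit G r B ρ' := by
  intro v hv
  obtain ⟨hlvl, hroot, hprnt⟩ := h v hv
  refine ⟨(hagree v hv).1.trans hlvl, fun hvr => (hagree v hv).2.trans (hroot hvr),
    fun hvr => ?_⟩
  obtain ⟨u, hpu, hvu, hlu⟩ := hprnt hvr
  have hu : u ∉ SB G r B :=
    hI.notMem_SB_of_adj hG hv (hD v) hvu (by have := hG.pos_dist_of_ne hvr; omega)
  exact ⟨u, (hagree v hv).2.trans hpu, hvu, (hagree u hu).1.trans hlu⟩

lemma agree_of_isExecM {e : ℕ → Config V} {A : ℕ → Set V} (h : IsSBLegit G r B (e 0))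
    (hG : G.Connected) (hD : ∀ v, G.dist v r ≤ D) (hexec : IsExecM G r B e A)
    (hI : IPred G r B D (e 0).lvl) (n : ℕ) :
    ∀ v ∉ SB G r B, (e n).lvl v = (e 0).lvl v ∧ (e n).prnt v = (e 0).prnt v := by
  induction n with
  | zero => exact fun _ _ => ⟨rfl, rfl⟩
  | succ n ih =>
    intro v hv
    have hlegit : IsSBLegit G r B (e n) := h.of_agree hG hD hI ih
    obtain ⟨hl, hp⟩ := (hexec n).eq_of_not_enabled (fun hvB => hv (subset_SB hvB))
      (hlegit.not_enabled hG hD (hI.isExecM hG hexec n) hv)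
    exact ⟨hl.trans (ih v hv).1, hp.trans (ih v hv).2⟩

end IsSBLegit

end BFS

open BFS in
theorem stmt17_general {V : Type*} (G : SimpleGraph V) (hG : G.Connected)
    (r : V) (B : Set V) (D : ℕ) (hD : ∀ u w, G.dist u w ≤ D)
    (e : ℕ → BFS.Config V) (A : ℕ → Set V) (hexec : BFS.IsExecM G r B e A)
    (hlvl : ∀ v, v ∉ BFS.SB G r B → (e 0).lvl v = G.dist v r)
    (hroot : (e 0).prnt r = none ∧ (e 0).lvl r = 0)
    (hprnt : ∀ v, v ∉ BFS.SB G r B → v ≠ r → ∃ u, (e 0).prnt v = some u ∧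
      G.Adj v u ∧ (e 0).lvl u = G.dist v r - 1 ∧
      ∀ q, G.Adj v q → (e 0).lvl u ≤ (e 0).lvl q)
    (hI : BFS.IPred G r B D (e 0).lvl) :
    (∀ v, v ∉ BFS.SB G r B → ¬ BFS.Enabled G r (e 0) v) ∧
    (∀ v, v ∉ BFS.SB G r B → ∀ n,
      (e n).lvl v = (e 0).lvl v ∧ (e n).prnt v = (e 0).prnt v) := by
  have hDr : ∀ v, G.dist v r ≤ D := fun v => hD v r
  have hlegit : IsSBLegit G r B (e 0) := fun v hv =>
    ⟨hlvl v hv, fun hvr => hvr ▸ hroot.1,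
      fun hvr => (hprnt v hv hvr).imp fun _ hu => ⟨hu.1, hu.2.1, hu.2.2.1⟩⟩
  exact ⟨fun v hv => hlegit.not_enabled hG hDr hI hv,
    fun v hv n => hlegit.agree_of_isExecM hG hDr hexec hI n v hv⟩

open BFS in
/-- In a configuration where every `v ∉ S_B` has `ℓ(v) = d(v,r)`, every neighbour of
such a `v` has level at least `d(v,r) − 1`, the root outputs `(⊥,0)`, and each
non-root `v ∉ S_B` points to a neighbour of minimal level `d(v,r) − 1`, no vertex
outside `S_B` is enabled under the `min+1` rule; hence, in any execution from this
configuration satisfying `I_D`, vertices outside `S_B` never change their output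
variables (the `(S_B, n−1)`-containment property). -/
theorem stmt17 {V : Type*} [Fintype V] (G : SimpleGraph V) (hG : G.Connected)
    (r : V) (B : Set V) (hrB : r ∉ B) (D : ℕ) (hD : ∀ u w, G.dist u w ≤ D)
    (e : ℕ → BFS.Config V) (A : ℕ → Set V) (hexec : BFS.IsExecM G r B e A)
    (hlvl : ∀ v, v ∉ BFS.SB G r B → (e 0).lvl v = G.dist v r)
    (hnbr : ∀ v, v ∉ BFS.SB G r B → ∀ p, G.Adj v p → G.dist v r - 1 ≤ (e 0).lvl p)
    (hroot : (e 0).prnt r = none ∧ (e 0).lvl r = 0)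
    (hprnt : ∀ v, v ∉ BFS.SB G r B → v ≠ r → ∃ u, (e 0).prnt v = some u ∧
      G.Adj v u ∧ (e 0).lvl u = G.dist v r - 1 ∧
      ∀ q, G.Adj v q → (e 0).lvl u ≤ (e 0).lvl q)
    (hI : BFS.IPred G r B D (e 0).lvl) :
    (∀ v, v ∉ BFS.SB G r B → ¬ BFS.Enabled G r (e 0) v) ∧
    (∀ v, v ∉ BFS.SB G r B → ∀ n,
      (e n).lvl v = (e 0).lvl v ∧ (e n).prnt v = (e 0).prnt v) :=
  stmt17_general G hG r B D hD e A hexec hlvl hroot hprnt hI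
end
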